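/- For n ≥ 1, α ∈ ℝ and u ∈ C¹_c(ℝⁿ \ {0}), one has ∫_{ℝⁿ} |∇u|² |x|^{−α} dx − ((n−2−α)/2)² ∫_{ℝⁿ} u² |x|^{−α−2} dx = ∫_{ℝⁿ} |∇(|x|^{(n−2−α)/2} u)|² |x|^{−(n−2)} dx. -/

import Mathlib

open MeasureTheory Real RealInnerProductSpace

noncomputable section

abbrev Euc (n : ℕ) := EuclideanSpace ℝ (Fin n)

/-- radial derivative ∂_r f = (x/|x|)·∇f -/
noncomputable def rDeriv (n : ℕ) (f : Euc n → ℝ) (x : Euc n) : ℝ :=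
  inner ℝ x (gradient f x) / ‖x‖

/-- T_α f = ∂_r f + ((n-2-α)/(2r)) f -/
noncomputable def Tw (n : ℕ) (α : ℝ) (f : Euc n → ℝ) (x : Euc n) : ℝ :=
  rDeriv n f x + (((n : ℝ) - 2 - α) / (2 * ‖x‖)) * f x

/-- spherical derivative L_j f = ∂_j f − (x_j/r) ∂_r f -/
noncomputable def Lop (n : ℕ) (j : Fin n) (f : Euc n → ℝ) (x : Euc n) : ℝ :=
  fderiv ℝ f x (EuclideanSpace.single j 1) - (x j / ‖x‖) * rDeriv n f x

/-- Euclidean Laplacian as sum of second partial derivatives -/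
noncomputable def lap (n : ℕ) (f : Euc n → ℝ) (x : Euc n) : ℝ :=
  ∑ j : Fin n,
    fderiv ℝ (fun y => fderiv ℝ f y (EuclideanSpace.single j 1)) x (EuclideanSpace.single j 1)

/-- radial Laplacian Δ_r = ∂_r² + ((n−1)/r) ∂_r -/
noncomputable def lapr (n : ℕ) (f : Euc n → ℝ) (x : Euc n) : ℝ :=
  rDeriv n (rDeriv n f) x + (((n : ℝ) - 1) / ‖x‖) * rDeriv n f x

/-- weighted L² norm squared: ‖g‖_β² = ∫ |g|² |x|^{−β} -/
noncomputable def wnorm2 (n : ℕ) (β : ℝ) (g : Euc n → ℝ) : ℝ :=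
  ∫ x : Euc n, (g x) ^ 2 * ‖x‖ ^ (-β)

end

/-! With `β = (n - 2 - α) / 2` and `v = |x|^β u`, one has `∇v = |x|^β (∇u + β u x / |x|²)`, hence
pointwise `|∇v|² |x|^{2-n} = |∇u|² |x|^{-α} + β² u² |x|^{-α-2} + β (x · ∇(u²)) |x|^{-α-2}`.
The cross term is an integral against the position field: since `div (x |x|^γ) = (n + γ) |x|^γ`
away from the origin, `∫ (x · ∇w) |x|^γ = -(n + γ) ∫ w |x|^γ` for `w` supported away from `0`,
and for `w = u²`, `γ = -α - 2` it equals `-2β² ∫ u² |x|^{-α-2}`. -/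

open Function

section

variable {E : Type*} [NormedAddCommGroup E] [NormedSpace ℝ E] [FiniteDimensional ℝ E]
  [MeasurableSpace E] [BorelSpace E] {μ : Measure E} [μ.IsAddHaarMeasure]

theorem integral_fderiv_apply_self {H : E → ℝ} (hH : ContDiff ℝ 1 H)
    (hc : HasCompactSupport H) :
    ∫ x, fderiv ℝ H x x ∂μ = -(Module.finrank ℝ E) * ∫ x, H x ∂μ := by
  let b := Module.finBasis ℝ E
  let ℓ i : E →L[ℝ] ℝ := LinearMap.toContinuousLinearMap (b.coord i)
  have hexpand x : fderiv ℝ H x x = ∑ i, ℓ i x * fderiv ℝ H x (b i) := by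
    conv_lhs => arg 2; rw [← b.sum_repr x]
    simp only [map_sum, map_smul, smul_eq_mul, ℓ, LinearMap.coe_toContinuousLinearMap',
      Module.Basis.coord_apply]
  have hDH : Continuous fun x => fderiv ℝ H x := hH.continuous_fderiv one_ne_zero
  have hint i : Integrable (fun x => ℓ i x * fderiv ℝ H x (b i)) μ :=
    ((ℓ i).continuous.mul (hDH.clm_apply continuous_const)).integrable_of_hasCompactSupport
      (hc.fderiv_apply (𝕜 := ℝ) (b i)).mul_left
  have hcoord i : ∫ x, ℓ i x * fderiv ℝ H x (b i) ∂μ = -∫ x, H x ∂μ := by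
    have := integral_mul_fderiv_eq_neg_fderiv_mul_of_integrable (μ := μ) (v := b i)
      (by simpa using (hH.continuous.integrable_of_hasCompactSupport hc).const_mul (ℓ i (b i)))
      (hint i) (((ℓ i).continuous.mul hH.continuous).integrable_of_hasCompactSupport hc.mul_left)
      (fun x _ => (ℓ i).differentiableAt) (fun x _ => hH.differentiable one_ne_zero x)
    simp only [ContinuousLinearMap.fderiv] at this
    simpa [ℓ] using this
  calc ∫ x, fderiv ℝ H x x ∂μ = ∫ x, ∑ i, ℓ i x * fderiv ℝ H x (b i) ∂μ := by
        simp_rw [hexpand]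
    _ = ∑ i, ∫ x, ℓ i x * fderiv ℝ H x (b i) ∂μ := integral_finsetSum _ fun i _ => hint i
    _ = -(Module.finrank ℝ E) * ∫ x, H x ∂μ := by simp [hcoord]

end

section

variable {E : Type*} [NormedAddCommGroup E] [InnerProductSpace ℝ E]

theorem hasFDerivAt_norm_rpow_of_ne_zero (c : ℝ) {x : E} (hx : x ≠ 0) :
    HasFDerivAt (fun y : E => ‖y‖ ^ c) ((c * ‖x‖ ^ (c - 2)) • innerSL ℝ x) x := by
  convert ((hasStrictFDerivAt_norm_sq x).rpow_const (p := c / 2) (by simp [hx])).hasFDerivAt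
    using 1
  · ext y
    rw [← Real.rpow_natCast_mul (norm_nonneg y)]
    congr 1
    ring
  · rw [← Real.rpow_natCast, ← Real.rpow_mul (norm_nonneg x), ← Nat.cast_smul_eq_nsmul ℝ,
      smul_smul]
    congr 1
    push_cast
    ring_nf

theorem fderiv_norm_rpow_apply_self (c : ℝ) {x : E} (hx : x ≠ 0) :
    fderiv ℝ (fun y : E => ‖y‖ ^ c) x x = c * ‖x‖ ^ c := by
  rw [(hasFDerivAt_norm_rpow_of_ne_zero c hx).fderiv]
  change c * ‖x‖ ^ (c - 2) * ⟪x, x⟫ = _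
  rw [real_inner_self_eq_norm_sq, mul_assoc, ← Real.rpow_natCast,
    ← Real.rpow_add (norm_pos_iff.2 hx)]
  norm_num

theorem contDiff_mul_norm_rpow {k : WithTop ℕ∞} {f : E → ℝ} (hf : ContDiff ℝ k f)
    (h0 : (0 : E) ∉ tsupport f) (γ : ℝ) : ContDiff ℝ k fun x => f x * ‖x‖ ^ γ := by
  refine contDiff_iff_contDiffAt.2 fun x => ?_
  by_cases hx : x = 0
  · subst hx
    refine contDiffAt_const (c := (0 : ℝ)) |>.congr_of_eventuallyEq ?_
    filter_upwards [notMem_tsupport_iff_eventuallyEq.1 h0] with y hy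
    simp [hy]
  · exact hf.contDiffAt.mul ((contDiffAt_norm ℝ hx).rpow_const_of_ne (norm_ne_zero_iff.2 hx))

variable [MeasurableSpace E] [BorelSpace E] {μ : Measure E}

theorem integrable_mul_norm_rpow [IsFiniteMeasureOnCompacts μ] {f : E → ℝ} {K : Set E}
    (hf : Continuous f) (hK : IsCompact K) (h0 : (0 : E) ∉ K) (hfK : support f ⊆ K) (γ : ℝ) :
    Integrable (fun x => f x * ‖x‖ ^ γ) μ := by
  have hts : tsupport f ⊆ K := closure_minimal hfK hK.isClosed
  exact (contDiff_mul_norm_rpow (contDiff_zero.2 hf) (fun h => h0 (hts h)) γ).continuous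
    |>.integrable_of_hasCompactSupport
      (HasCompactSupport.mul_right (hK.of_isClosed_subset (isClosed_tsupport f) hts))

theorem integral_fderiv_apply_self_mul_norm_rpow [FiniteDimensional ℝ E] [μ.IsAddHaarMeasure]
    {w : E → ℝ} (hw : ContDiff ℝ 1 w) (hc : HasCompactSupport w) (h0 : (0 : E) ∉ tsupport w)
    (γ : ℝ) :
    ∫ x, fderiv ℝ w x x * ‖x‖ ^ γ ∂μ
      = -(Module.finrank ℝ E + γ) * ∫ x, w x * ‖x‖ ^ γ ∂μ := by
  have hEuler x : fderiv ℝ (fun y => w y * ‖y‖ ^ γ) x x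
      = fderiv ℝ w x x * ‖x‖ ^ γ + γ * (w x * ‖x‖ ^ γ) := by
    by_cases hx : x = 0
    · simp [hx, image_eq_zero_of_notMem_tsupport h0]
    · have hd : HasFDerivAt (fun y => w y * ‖y‖ ^ γ) _ x :=
        (hw.differentiable one_ne_zero x).hasFDerivAt.mul
          (hasFDerivAt_norm_rpow_of_ne_zero γ hx).differentiableAt.hasFDerivAt
      rw [hd.fderiv]
      simp only [add_apply, smul_apply, smul_eq_mul, fderiv_norm_rpow_apply_self γ hx]
      ring
  have hDw : support (fun x => fderiv ℝ w x x) ⊆ tsupport w := fun x hx =>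
    by_contra fun h => hx (by simp [fderiv_of_notMem_tsupport ℝ h])
  have hint₁ : Integrable (fun x => fderiv ℝ w x x * ‖x‖ ^ γ) μ :=
    integrable_mul_norm_rpow ((hw.continuous_fderiv one_ne_zero).clm_apply continuous_id)
      hc h0 hDw γ
  have hint₂ : Integrable (fun x => w x * ‖x‖ ^ γ) μ :=
    integrable_mul_norm_rpow hw.continuous hc h0 (subset_tsupport w) γ
  have := integral_fderiv_apply_self (μ := μ) (contDiff_mul_norm_rpow hw h0 γ)
    (HasCompactSupport.mul_right hc)
  rw [integral_congr_ae (Filter.Eventually.of_forall hEuler), integral_add hint₁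
    (hint₂.const_mul γ), integral_const_mul] at this
  linarith

end

section

variable {E : Type*} [NormedAddCommGroup E] [InnerProductSpace ℝ E] [CompleteSpace E]

theorem gradient_eq_zero_of_notMem_tsupport {u : E → ℝ} {x : E} (hx : x ∉ tsupport u) :
    gradient u x = 0 := by
  simp [gradient, fderiv_of_notMem_tsupport ℝ hx]

theorem HasGradientAt.norm_rpow_mul {u : E → ℝ} {g x : E} (hu : HasGradientAt u g x) (β : ℝ)
    (hx : x ≠ 0) :
    HasGradientAt (fun y => ‖y‖ ^ β * u y)
      (‖x‖ ^ β • g + (β * ‖x‖ ^ (β - 2) * u x) • x) x := by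
  rw [hasGradientAt_iff_hasFDerivAt]
  refine (((hasFDerivAt_norm_rpow_of_ne_zero β hx).mul hu.hasFDerivAt :
    HasFDerivAt (fun y => ‖y‖ ^ β * u y) _ x)).congr_fderiv ?_
  ext y
  simp only [add_apply, smul_apply, InnerProductSpace.toDual_apply_apply, smul_eq_mul,
    coe_innerSL_apply, inner_add_left, real_inner_smul_left]
  ring

theorem norm_gradient_norm_rpow_mul_sq {u : E → ℝ} (hu : Differentiable ℝ u)
    (h0 : (0 : E) ∉ tsupport u) (α β : ℝ) (x : E) :
    ‖gradient (fun y => ‖y‖ ^ β * u y) x‖ ^ 2 * ‖x‖ ^ (-(α + 2 * β))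
      = ‖gradient u x‖ ^ 2 * ‖x‖ ^ (-α) + β ^ 2 * (u x ^ 2 * ‖x‖ ^ (-(α + 2)))
        + β * (fderiv ℝ (fun y => u y ^ 2) x x * ‖x‖ ^ (-(α + 2))) := by
  by_cases hx : x = 0
  · subst hx
    have hprod : (0 : E) ∉ tsupport fun y => ‖y‖ ^ β * u y :=
      fun h => h0 (tsupport_mul_subset_right h)
    simp [gradient_eq_zero_of_notMem_tsupport h0, gradient_eq_zero_of_notMem_tsupport hprod,
      image_eq_zero_of_notMem_tsupport h0]
  have hr : 0 < ‖x‖ := norm_pos_iff.2 hx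
  rw [((hu x).hasGradientAt.norm_rpow_mul β hx).gradient, fderiv_fun_pow 2 (hu x)]
  set G := gradient u x
  set r := ‖x‖
  have hnorm : ‖r ^ β • G + (β * r ^ (β - 2) * u x) • x‖ ^ 2
      = (r ^ β) ^ 2 * ‖G‖ ^ 2 + 2 * (r ^ β * (β * r ^ (β - 2) * u x)) * fderiv ℝ u x x
        + (β * r ^ (β - 2) * u x) ^ 2 * r ^ 2 := by
    rw [norm_add_sq_real, real_inner_smul_left, real_inner_smul_right, inner_gradient_left]
    simp only [norm_smul, Real.norm_eq_abs, mul_pow, sq_abs]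
    ring
  have e1 : r ^ β * r ^ β * r ^ (-(α + 2 * β)) = r ^ (-α) := by
    rw [← Real.rpow_add hr, ← Real.rpow_add hr]
    ring_nf
  have e2 : r ^ β * r ^ (β - 2) * r ^ (-(α + 2 * β)) = r ^ (-(α + 2)) := by
    rw [← Real.rpow_add hr, ← Real.rpow_add hr]
    ring_nf
  have e3 : r ^ (β - 2) * r ^ (β - 2) * r ^ (2 : ℕ) * r ^ (-(α + 2 * β))
      = r ^ (-(α + 2)) := by
    rw [← Real.rpow_natCast, ← Real.rpow_add hr, ← Real.rpow_add hr, ← Real.rpow_add hr]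
    push_cast
    ring_nf
  rw [hnorm]
  simp only [smul_apply, smul_eq_mul]
  linear_combination
    ‖G‖ ^ 2 * e1 + (2 * β * u x * fderiv ℝ u x x) * e2 + (β ^ 2 * u x ^ 2) * e3

end

theorem weighted_hardy_identity_general (n : ℕ) (α : ℝ) (u : Euc n → ℝ)
    (hu : ContDiff ℝ 1 u) (hc : HasCompactSupport u) (h0 : (0 : Euc n) ∉ tsupport u) :
    wnorm2 n α (fun x => ‖gradient u x‖) - (((n : ℝ) - 2 - α) / 2) ^ 2 * wnorm2 n (α + 2) u
      = wnorm2 n ((n : ℝ) - 2)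
          (fun x => ‖gradient (fun y : Euc n => ‖y‖ ^ (((n : ℝ) - 2 - α) / 2) * u y) x‖) := by
  set β := ((n : ℝ) - 2 - α) / 2 with hβ
  have hsq : tsupport (fun x => u x ^ 2) = tsupport u := by
    rw [tsupport, tsupport, support_pow u two_ne_zero]
  have hint {f : Euc n → ℝ} (hf : Continuous f) (hfu : support f ⊆ tsupport u) (γ : ℝ) :
      Integrable (fun x => f x * ‖x‖ ^ γ) := integrable_mul_norm_rpow hf hc h0 hfu γ
  have hA := hint (f := fun x => ‖gradient u x‖ ^ 2)
    (((InnerProductSpace.toDual ℝ _).symm.continuous.comp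
      (hu.continuous_fderiv one_ne_zero)).norm.pow 2)
    (fun x hx => by_contra fun h => hx (by simp [gradient_eq_zero_of_notMem_tsupport h])) (-α)
  have hB := hint (f := fun x => u x ^ 2) (hu.continuous.pow 2) (hsq ▸ subset_tsupport _)
    (-(α + 2))
  have hC := hint (f := fun x => fderiv ℝ (fun y => u y ^ 2) x x)
    (((hu.pow 2).continuous_fderiv one_ne_zero).clm_apply continuous_id)
    (fun x hx => by_contra fun h => hx (by simp [fderiv_of_notMem_tsupport ℝ (hsq ▸ h)]))
    (-(α + 2))
  have hEuler := integral_fderiv_apply_self_mul_norm_rpow (μ := volume) (hu.pow 2)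
    (by rwa [HasCompactSupport, hsq]) (hsq ▸ h0) (-(α + 2))
  rw [finrank_euclideanSpace_fin] at hEuler
  have hexp : (n : ℝ) - 2 = α + 2 * β := by ring
  simp only [wnorm2, hexp, norm_gradient_norm_rpow_mul_sq (hu.differentiable one_ne_zero) h0]
  rw [integral_add ?_ (hC.const_mul _), integral_add hA (hB.const_mul _), integral_const_mul,
    integral_const_mul, hEuler, hβ]
  · ring
  · exact hA.add (hB.const_mul _)

theorem weighted_hardy_identity (n : ℕ) (hn : 1 ≤ n) (α : ℝ) (u : Euc n → ℝ)
    (hu : ContDiff ℝ 1 u) (hc : HasCompactSupport u) (h0 : (0 : Euc n) ∉ tsupport u) :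
    wnorm2 n α (fun x => ‖gradient u x‖) - (((n : ℝ) - 2 - α) / 2) ^ 2 * wnorm2 n (α + 2) u
      = wnorm2 n ((n : ℝ) - 2)
          (fun x => ‖gradient (fun y : Euc n => ‖y‖ ^ (((n : ℝ) - 2 - α) / 2) * u y) x‖) :=
  weighted_hardy_identity_general n α u hu hc h0
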